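/- arXiv:1210.7618 — 4 statements merged into one kernel-verified Lean document; each statement's English description precedes it below -/
import Mathlib

section
/- Let X be a finite set and F ⊆ 2^X a family of winning sets. In the (a,b) Maker-Breaker game on (X,F), if Σ_{F∈F} (1+b)^{-|F|/a} < 1/(1+b), then Breaker (moving first or second) has a winning strategy. -/
/-!
Beck's potential argument. While Maker holds `M`, a winning set `W` that Breaker has not
touched gets weight `(1 + b) ^ (-|W \ M| / a)`; a set that Maker completes has weight `1`,
so Breaker wins as long as the total weight (the potential) stays below `1`. By Bernoulli's
inequality `(1 + b) ^ (k / a) ≤ 1 + k b / a`, a move of Maker raises the potential by at most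
`b / a` times the total danger of the claimed points, the danger of a point being the weight of
the surviving sets through it. Breaker claims, one at a time, a point of maximal danger, and
so lowers the potential by at least `b` times the largest danger left. Hence the invariant
"potential + b · danger x < 1 for every free `x`" at Maker's turn survives a round, and the
hypothesis makes it hold at the start.
-/

open Finset

variable {α : Type*} [Fintype α] [DecidableEq α]

/-- `breakerWinsAux F a b fuel t M B` : in the `(a,b)` Maker-Breaker game on the
(finite) board `α` with family of winning sets `F`, from the position where Maker has
claimed `M` and Breaker has claimed `B`, the player to move being Breaker if `t = true`
and Maker if `t = false`, Breaker can force that by the time all board elements are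
claimed, Maker has not fully claimed any winning set.  In each turn the player to move
claims exactly his bias many previously unclaimed elements (or all remaining elements
if fewer remain).  The `fuel` parameter bounds the number of remaining turns; since
each turn from a position with free elements claims at least one element (for positive
biases), `fuel = |α| + 1` captures the full game. -/
def breakerWinsAux (F : Finset (Finset α)) (a b : ℕ) :
    ℕ → Bool → Finset α → Finset α → Prop
  | 0, _, M, _ => ¬ ∃ W ∈ F, W ⊆ M
  | fuel + 1, t, M, B =>
      let free := Finset.univ \ (M ∪ B)
      if free.Nonempty then
        if t then
          ∃ S ⊆ free, S.card = min b free.card ∧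
            breakerWinsAux F a b fuel false M (B ∪ S)
        else
          ∀ S ⊆ free, S.card = min a free.card →
            breakerWinsAux F a b fuel true (M ∪ S) B
      else ¬ ∃ W ∈ F, W ⊆ M

/-- Breaker has a winning strategy in the `(a,b)` game `(α, F)`, moving first
(`t = true`) or second (`t = false`). -/
def BreakerWins (F : Finset (Finset α)) (a b : ℕ) (t : Bool) : Prop :=
  breakerWinsAux F a b (Fintype.card α + 1) t ∅ ∅

namespace MakerBreaker

section Potential

variable {α : Type*} [DecidableEq α] (F : Finset (Finset α)) (a b : ℕ)

noncomputable def weight (M W : Finset α) : ℝ :=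
  (1 + b : ℝ) ^ (-((#(W \ M) : ℝ) / a))

noncomputable def potential (M B : Finset α) : ℝ :=
  ∑ W ∈ F with Disjoint W B, weight a b M W

noncomputable def danger (M B : Finset α) (x : α) : ℝ :=
  ∑ W ∈ F with Disjoint W B ∧ x ∈ W, weight a b M W

variable {F a b}

lemma weight_pos (M W : Finset α) : 0 < weight a b M W := by
  unfold weight; positivity

lemma weight_of_subset {M W : Finset α} (h : W ⊆ M) : weight a b M W = 1 := by
  simp [weight, sdiff_eq_empty_iff_subset.2 h]

lemma danger_le_potential (M B : Finset α) (x : α) :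
    danger F a b M B x ≤ potential F a b M B :=
  sum_le_sum_of_subset_of_nonneg (monotone_filter_right _ fun _ _ h => h.1)
    fun W _ _ => (weight_pos M W).le

lemma potential_anti (M : Finset α) {B B' : Finset α} (h : B ⊆ B') :
    potential F a b M B' ≤ potential F a b M B :=
  sum_le_sum_of_subset_of_nonneg (monotone_filter_right _ fun _ _ hW => hW.mono_right h)
    fun W _ _ => (weight_pos M W).le

lemma danger_anti (M : Finset α) {B B' : Finset α} (h : B ⊆ B') (x : α) :
    danger F a b M B' x ≤ danger F a b M B x :=
  sum_le_sum_of_subset_of_nonneg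
    (monotone_filter_right _ fun _ _ hW => ⟨hW.1.mono_right h, hW.2⟩)
    fun W _ _ => (weight_pos M W).le

lemma potential_insert_add_danger (M B : Finset α) (y : α) :
    potential F a b M (insert y B) + danger F a b M B y = potential F a b M B := by
  rw [potential, potential, danger,
    ← sum_filter_not_add_sum_filter (F.filter (Disjoint · B)) (y ∈ ·), filter_filter, filter_filter]
  congr 2
  exact filter_congr fun W _ => by rw [disjoint_insert_right, and_comm]

lemma potential_empty_right (M : Finset α) :
    potential F a b M ∅ = ∑ W ∈ F, weight a b M W := by
  simp [potential]

lemma not_exists_subset_of_potential_lt_one {M B : Finset α} (hMB : Disjoint M B)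
    (h : potential F a b M B < 1) : ¬ ∃ W ∈ F, W ⊆ M := by
  rintro ⟨W, hWF, hWM⟩
  have hW : W ∈ F.filter (Disjoint · B) := mem_filter.2 ⟨hWF, hMB.mono_left hWM⟩
  have := single_le_sum (fun W _ => (weight_pos (a := a) (b := b) M W).le) hW
  rw [weight_of_subset hWM] at this
  exact this.not_gt h

lemma weight_union_le {M S : Finset α} (hSM : Disjoint S M) (hS : #S ≤ a)
    (W : Finset α) : weight a b (M ∪ S) W ≤ weight a b M W * (1 + b / a * #(W ∩ S)) := by
  have hcard : #(W \ (M ∪ S)) + #(W ∩ S) = #(W \ M) := by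
    have hinter : W \ M ∩ S = W ∩ S := by
      rw [sdiff_inter_right_comm, sdiff_eq_self_of_disjoint (hSM.mono_left inter_subset_right)]
    rw [← hinter, ← card_sdiff_add_card_inter (W \ M) S, sdiff_sdiff_left, sup_eq_union]
  have hk : (#(W ∩ S) : ℝ) ≤ a := by exact_mod_cast (card_le_card inter_subset_right).trans hS
  have hsplit : weight a b (M ∪ S) W = weight a b M W * (1 + b : ℝ) ^ ((#(W ∩ S) : ℝ) / a) := by
    rw [weight, weight, ← Real.rpow_add (by positivity), ← hcard]
    push_cast
    ring_nf
  have hbernoulli : (1 + b : ℝ) ^ ((#(W ∩ S) : ℝ) / a) ≤ 1 + (#(W ∩ S) : ℝ) / a * b :=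
    rpow_one_add_le_one_add_mul_self (by linarith [b.cast_nonneg (α := ℝ)])
      (by positivity) (div_le_one_of_le₀ hk (Nat.cast_nonneg a))
  rw [hsplit, div_mul_comm]
  exact mul_le_mul_of_nonneg_left hbernoulli (weight_pos M W).le

lemma sum_danger_eq (M B S : Finset α) :
    ∑ x ∈ S, danger F a b M B x = ∑ W ∈ F with Disjoint W B, weight a b M W * #(W ∩ S) := by
  simp_rw [danger, ← filter_filter]
  rw [sum_comm' (t' := F.filter (Disjoint · B)) (s' := (S ∩ ·)) fun x W => by
    simp only [mem_filter, mem_inter]; tauto]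
  exact sum_congr rfl fun W _ => by rw [sum_const, nsmul_eq_mul, inter_comm, mul_comm]

lemma potential_union_le {M B S : Finset α} (hSM : Disjoint S M) (hS : #S ≤ a) :
    potential F a b (M ∪ S) B ≤ potential F a b M B + b / a * ∑ x ∈ S, danger F a b M B x := by
  rw [sum_danger_eq, mul_sum, potential, potential, ← sum_add_distrib]
  gcongr with W
  calc weight a b (M ∪ S) W ≤ weight a b M W * (1 + b / a * #(W ∩ S)) :=
        weight_union_le hSM hS W
    _ = _ := by ring

lemma exists_greedy_claim (M B T : Finset α) {j : ℕ} (hj : j ≤ #T) :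
    ∃ S ⊆ T, #S = j ∧ ∀ x ∈ T \ S,
      potential F a b M (B ∪ S) + j * danger F a b M (B ∪ S) x ≤ potential F a b M B := by
  induction j with
  | zero => exact ⟨∅, empty_subset _, card_empty, fun x _ => by simp⟩
  | succ j ih =>
    obtain ⟨S, hST, hcard, hS⟩ := ih (by omega)
    have hne : (T \ S).Nonempty := by rw [← card_pos, card_sdiff_of_subset hST]; omega
    obtain ⟨y, hy, hmax⟩ := exists_max_image (T \ S) (danger F a b M (B ∪ S)) hne
    obtain ⟨hyT, hyS⟩ := mem_sdiff.1 hy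
    refine ⟨insert y S, insert_subset hyT hST, by rw [card_insert_of_notMem hyS, hcard],
      fun x hx => ?_⟩
    have hx' : x ∈ T \ S := by
      simp only [mem_sdiff, mem_insert, not_or] at hx ⊢
      exact ⟨hx.1, hx.2.2⟩
    have hclaim := potential_insert_add_danger (F := F) (a := a) (b := b) M (B ∪ S) y
    have hdanger := danger_anti (F := F) (a := a) (b := b) M (subset_insert y (B ∪ S)) x
    have hj := mul_le_mul_of_nonneg_left hdanger (Nat.cast_nonneg (α := ℝ) j)
    rw [union_insert]
    push_cast
    linarith [hS x hx', hmax x hx']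

end Potential

section Game

variable {F : Finset (Finset α)} {a b : ℕ}

def SafeAtMakerTurn (F : Finset (Finset α)) (a b : ℕ) (M B : Finset α) : Prop :=
  potential F a b M B < 1 ∧
    ∀ x ∈ univ \ (M ∪ B), potential F a b M B + b * danger F a b M B x < 1

lemma disjoint_of_subset_free {M B S : Finset α} (hS : S ⊆ univ \ (M ∪ B)) :
    Disjoint S M ∧ Disjoint S B :=
  disjoint_union_right.1 (subset_sdiff.1 hS).2

lemma exists_breaker_move_safe {M B : Finset α} (h : potential F a b M B < 1) :
    ∃ S ⊆ univ \ (M ∪ B), #S = min b #(univ \ (M ∪ B)) ∧ SafeAtMakerTurn F a b M (B ∪ S) := by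
  obtain ⟨S, hS, hcard, hgreedy⟩ :=
    exists_greedy_claim (F := F) (a := a) (b := b) M B (univ \ (M ∪ B)) (min_le_right b _)
  refine ⟨S, hS, hcard, (potential_anti M subset_union_left).trans_lt h, fun x hx => ?_⟩
  have hx' : x ∈ (univ \ (M ∪ B)) \ S := by
    simp only [mem_sdiff, mem_union, mem_univ, true_and, not_or] at hx ⊢
    exact ⟨⟨hx.1, hx.2.1⟩, hx.2.2⟩
  have hmin : min b #(univ \ (M ∪ B)) = b := by
    refine min_eq_left (not_lt.1 fun hlt => (mem_sdiff.1 hx').2 ?_)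
    rw [eq_of_subset_of_card_le hS (by rw [hcard, min_eq_right hlt.le])]
    exact (mem_sdiff.1 hx').1
  have := hgreedy x hx'
  rw [hmin] at this
  linarith

lemma potential_union_lt_one_of_safe {M B S : Finset α} (hsafe : SafeAtMakerTurn F a b M B)
    (hS : S ⊆ univ \ (M ∪ B)) (hS0 : S.Nonempty) (hSa : #S ≤ a) :
    potential F a b (M ∪ S) B < 1 := by
  obtain ⟨hpot, hdanger⟩ := hsafe
  have ha : (0 : ℝ) < a := by exact_mod_cast hS0.card_pos.trans_le hSa
  have hsum : b * ∑ x ∈ S, danger F a b M B x < a * (1 - potential F a b M B) :=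
    calc b * ∑ x ∈ S, danger F a b M B x < ∑ _x ∈ S, (1 - potential F a b M B) := by
          rw [mul_sum]
          exact sum_lt_sum_of_nonempty hS0 fun x hx => by linarith [hdanger x (hS hx)]
      _ = #S * (1 - potential F a b M B) := by rw [sum_const, nsmul_eq_mul]
      _ ≤ a * (1 - potential F a b M B) := by gcongr
  calc potential F a b (M ∪ S) B
      ≤ potential F a b M B + b / a * ∑ x ∈ S, danger F a b M B x :=
        potential_union_le (disjoint_of_subset_free hS).1 hSa
    _ < 1 := by
        rw [div_mul_eq_mul_div]
        linarith [(div_lt_iff₀' ha).2 hsum]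

theorem breakerWinsAux_of_potential (ha : 0 < a) (fuel : ℕ) {M B : Finset α}
    (hMB : Disjoint M B) :
    (potential F a b M B < 1 → breakerWinsAux F a b fuel true M B) ∧
      (SafeAtMakerTurn F a b M B → breakerWinsAux F a b fuel false M B) := by
  induction fuel generalizing M B with
  | zero =>
    exact ⟨not_exists_subset_of_potential_lt_one hMB,
      fun h => not_exists_subset_of_potential_lt_one hMB h.1⟩
  | succ fuel ih =>
    constructor
    · intro h
      simp only [breakerWinsAux, if_true]
      split_ifs with hfree
      · obtain ⟨S, hS, hcard, hsafe⟩ := exists_breaker_move_safe h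
        exact ⟨S, hS, hcard,
          (ih (disjoint_union_right.2 ⟨hMB, (disjoint_of_subset_free hS).1.symm⟩)).2 hsafe⟩
      · exact not_exists_subset_of_potential_lt_one hMB h
    · intro h
      simp only [breakerWinsAux, Bool.false_eq_true, if_false]
      split_ifs with hfree
      · intro S hS hcard
        have hS0 : S.Nonempty := by rw [← card_pos, hcard]; exact lt_min ha hfree.card_pos
        exact (ih (disjoint_union_left.2 ⟨hMB, (disjoint_of_subset_free hS).2⟩)).1
          (potential_union_lt_one_of_safe h hS hS0 (hcard ▸ min_le_left a _))
      · exact not_exists_subset_of_potential_lt_one hMB h.1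

end Game

end MakerBreaker

open MakerBreaker

theorem breaker_criterion_general (F : Finset (Finset α)) (a b : ℕ) (ha : 0 < a)
    (h : ∑ W ∈ F, ((1 + b : ℝ)) ^ (-((W.card : ℝ) / a)) < 1 / (1 + b)) :
    BreakerWins F a b true ∧ BreakerWins F a b false := by
  have hpot : potential F a b ∅ ∅ < 1 / (1 + b) := by
    simpa [potential_empty_right, weight] using h
  have hb : (0 : ℝ) ≤ b := b.cast_nonneg
  have hpot1 : potential F a b ∅ ∅ < 1 :=
    hpot.trans_le (div_le_one_of_le₀ (by linarith) (by positivity))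
  have hsafe : SafeAtMakerTurn F a b ∅ ∅ := by
    refine ⟨hpot1, fun x _ => ?_⟩
    have := mul_le_mul_of_nonneg_left (danger_le_potential (F := F) (a := a) (b := b) ∅ ∅ x) hb
    rw [lt_div_iff₀ (by positivity)] at hpot
    linarith
  have hstart := breakerWinsAux_of_potential (F := F) (b := b) ha (Fintype.card α + 1)
    (disjoint_empty_left ∅)
  exact ⟨hstart.1 hpot1, hstart.2 hsafe⟩

/-- Beck's criterion. If
`∑_{W ∈ F} (1+b)^{-|W|/a} < 1/(1+b)`, then Breaker, as a first or second player,
has a winning strategy in the `(a,b)` Maker-Breaker game `(α, F)`. -/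
theorem breaker_criterion (F : Finset (Finset α)) (a b : ℕ) (ha : 0 < a) (hb : 0 < b)
    (h : ∑ W ∈ F, ((1 + b : ℝ)) ^ (-((W.card : ℝ) / a)) < 1 / (1 + b)) :
    BreakerWins F a b true ∧ BreakerWins F a b false :=
  breaker_criterion_general F a b ha h
end

section
/- Let p ≥ (ln n)/n. With probability tending to 1 as n → ∞, G ~ G(n,p) satisfies: for every subset U of vertices, the number of edges spanned by U satisfies e(U) ≤ max{3|U|·ln n, 3|U|²·p}. -/
open MeasureTheory Filter

/-- The Erdős–Rényi random graph measure `G(n,p)`: each potential edge (an element of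
`Sym2 (Fin n)`) is present independently with probability `p`. -/
noncomputable def gnp (n : ℕ) (p : ENNReal) (hp : p ≤ 1) :
    Measure (Sym2 (Fin n) → Bool) :=
  Measure.pi fun _ => (PMF.bernoulli p.toNNReal
    (by simpa using ENNReal.toNNReal_mono ENNReal.one_ne_top hp)).toMeasure

/-- The graph determined by an outcome `ω` of the edge indicators. -/
def graphOf {n : ℕ} (ω : Sym2 (Fin n) → Bool) : SimpleGraph (Fin n) :=
  SimpleGraph.fromEdgeSet {e | ω e = true}


/-- The number of edges of `G` spanned by the vertex set `U`. -/
noncomputable def edgesIn {V : Type*} (G : SimpleGraph V) (U : Set V) : ℕ :=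
  {e ∈ G.edgeSet | ∀ x ∈ e, x ∈ U}.ncard

/-! Fix a nonempty vertex set `U` with `k` elements and let `T` be the least integer above
`max (3 k ln n) (3 k² p)`. If `U` spans at least `T` edges, then some `T` of its at most
`k²/2` vertex pairs are all present, so
`P(e(U) ≥ T) ≤ C(k²/2, T) pᵀ ≤ (e k² p / 2T)ᵀ ≤ 2⁻ᵀ` because `T ≥ 3 k² p`,
and `2⁻ᵀ ≤ n⁻²ᵏ` because `T ≥ 3 k ln n`. A union bound over all nonempty `U` bounds the
failure probability by `(1 + n⁻²)ⁿ - 1 ≤ e^{1/n} - 1 → 0`. -/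

open Finset Real

section PotentialEdges

variable {V : Type*} [DecidableEq V]

def potentialEdges (U : Finset V) : Finset (Sym2 V) := {e ∈ U.sym2 | ¬e.IsDiag}

theorem card_potentialEdges (U : Finset V) : #(potentialEdges U) = (#U).choose 2 := by
  rw [potentialEdges, sym2_eq_image, Sym2.filter_image_mk_not_isDiag, Sym2.card_image_offDiag]

end PotentialEdges

theorem edgesIn_graphOf {n : ℕ} (ω : Sym2 (Fin n) → Bool) (U : Finset (Fin n)) :
    edgesIn (graphOf ω) U = #{e ∈ potentialEdges U | ω e = true} := by
  rw [edgesIn, ← Set.ncard_coe_finset]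
  congr 1
  ext e
  simp only [graphOf, SimpleGraph.edgeSet_fromEdgeSet, potentialEdges, coe_filter, mem_filter,
    mem_sym2_iff, Set.mem_setOf_eq, Set.mem_sdiff, Sym2.mem_diagSet]
  tauto

theorem choose_mul_pow_le (m T : ℕ) {q : ℝ} (hq : 0 ≤ q) :
    (m.choose T : ℝ) * q ^ T ≤ (exp 1 * m * q / T) ^ T := by
  rcases T.eq_zero_or_pos with rfl | hT
  · simp
  have hTpos : (0 : ℝ) < T := by exact_mod_cast hT
  have hfact : 1 / (T.factorial : ℝ) ≤ (exp 1 / T) ^ T := by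
    rw [div_pow, exp_one_pow, le_div_iff₀ (by positivity), one_div_mul_eq_div]
    exact pow_div_factorial_le_exp _ hTpos.le T
  calc (m.choose T : ℝ) * q ^ T ≤ (m ^ T / T.factorial) * q ^ T := by
        gcongr; exact Nat.choose_le_pow_div T m
    _ = (m * q) ^ T * (1 / T.factorial) := by ring
    _ ≤ (m * q) ^ T * (exp 1 / T) ^ T := by gcongr
    _ = (exp 1 * m * q / T) ^ T := by rw [← mul_pow]; ring

theorem choose_mul_pow_le_exp_neg {m k T : ℕ} {q L : ℝ} (hq : 0 ≤ q)
    (hm : m ≤ k.choose 2) (hTq : 3 * (k : ℝ) ^ 2 * q ≤ T) (hTL : 3 * k * L ≤ T) :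
    (m.choose T : ℝ) * q ^ T ≤ exp (-(2 * k * L)) := by
  have hhalf : exp 1 * m * q / T ≤ 1 / 2 := by
    rcases T.eq_zero_or_pos with rfl | hT
    · simp
    rw [div_le_iff₀ (by exact_mod_cast hT)]
    have hmk : (m : ℝ) ≤ k ^ 2 / 2 := by
      calc (m : ℝ) ≤ k.choose 2 := by exact_mod_cast hm
        _ ≤ k ^ 2 / 2 := by simpa using Nat.choose_le_pow_div (α := ℝ) 2 k
    have he : exp 1 ≤ 3 := (exp_one_lt_d9.trans (by norm_num)).le
    have hmq : (m : ℝ) * q ≤ T / 6 := by nlinarith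
    nlinarith [exp_pos 1, mul_nonneg (Nat.cast_nonneg m) hq]
  have hlog2 : (2 / 3 : ℝ) < log 2 := lt_trans (by norm_num) log_two_gt_d9
  calc (m.choose T : ℝ) * q ^ T ≤ (exp 1 * m * q / T) ^ T := choose_mul_pow_le m T hq
    _ ≤ (1 / 2) ^ T := by gcongr
    _ = exp (-(T * log 2)) := by
        rw [exp_neg, exp_nat_mul, exp_log two_pos, one_div, inv_pow]
    _ ≤ exp (-(2 * k * L)) := by
        rw [exp_le_exp]
        nlinarith [(T.cast_nonneg : (0 : ℝ) ≤ T)]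

theorem Finset.sum_erase_empty_pow_card {α R : Type*} [Fintype α] [DecidableEq α]
    [CommRing R] (x : R) :
    ∑ U ∈ (univ : Finset (Finset α)).erase ∅, x ^ #U = (1 + x) ^ Fintype.card α - 1 := by
  have h := Fintype.sum_pow_mul_eq_add_pow α x 1
  simp only [one_pow, mul_one] at h
  rw [← add_sum_erase _ _ (mem_univ ∅), card_empty, pow_zero, add_comm x] at h
  rw [← h, add_sub_cancel_left]

theorem tendsto_one_add_exp_neg_two_mul_log_pow_sub_one :
    Tendsto (fun n : ℕ => (1 + exp (-(2 * log n))) ^ n - 1) atTop (nhds 0) := by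
  have hexp : Tendsto (fun n : ℕ => exp (n : ℝ)⁻¹ - 1) atTop (nhds 0) := by
    simpa using
      ((continuous_exp.tendsto 0).comp (tendsto_inv_atTop_nhds_zero_nat (𝕜 := ℝ))).sub_const 1
  refine tendsto_of_tendsto_of_tendsto_of_le_of_le tendsto_const_nhds hexp
    (fun n => sub_nonneg.2 (one_le_pow₀ (le_add_of_nonneg_right (exp_pos _).le))) fun n => ?_
  have hmul : (n : ℝ) * exp (-(2 * log n)) = (n : ℝ)⁻¹ := by
    rcases n.eq_zero_or_pos with rfl | hn
    · simp
    rw [exp_neg, two_mul, exp_add, exp_log (by exact_mod_cast hn)]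
    field_simp
  calc (1 + exp (-(2 * log n))) ^ n - 1 ≤ exp (exp (-(2 * log n))) ^ n - 1 := by
        gcongr; linarith [add_one_le_exp (exp (-(2 * log n)))]
    _ = exp (n : ℝ)⁻¹ - 1 := by rw [← exp_nat_mul, hmul]

section Gnp

variable (n : ℕ) (p : ENNReal) (hp : p ≤ 1)

instance isProbabilityMeasure_gnp : IsProbabilityMeasure (gnp n p hp) := by
  unfold gnp; infer_instance

theorem gnp_forall_mem_eq_true (S : Finset (Sym2 (Fin n))) :
    gnp n p hp {ω | ∀ e ∈ S, ω e = true} = p ^ #S := by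
  classical
  have hcyl : {ω : Sym2 (Fin n) → Bool | ∀ e ∈ S, ω e = true} =
      Set.univ.pi fun e => if e ∈ (S : Set (Sym2 (Fin n))) then {true} else Set.univ := by
    rw [Set.pi_univ_ite]
    ext ω
    simp
  have hcoord : (PMF.bernoulli p.toNNReal
      (by simpa using ENNReal.toNNReal_mono ENNReal.one_ne_top hp)).toMeasure {true} = p := by
    rw [PMF.toMeasure_apply_singleton _ _ (measurableSet_singleton _)]
    exact (PMF.bernoulli_apply _ true).trans
      (ENNReal.coe_toNNReal (ne_top_of_le_ne_top ENNReal.one_ne_top hp))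
  rw [gnp, hcyl, Measure.pi_pi]
  simp only [mem_coe, apply_ite, hcoord, measure_univ]
  rw [Fintype.prod_ite_mem, prod_const]

theorem gnp_le_card_filter_le (S : Finset (Sym2 (Fin n))) (T : ℕ) :
    gnp n p hp {ω | T ≤ #{e ∈ S | ω e = true}} ≤ (#S).choose T * p ^ T := by
  have hcover : {ω : Sym2 (Fin n) → Bool | T ≤ #{e ∈ S | ω e = true}} ⊆
      ⋃ R ∈ S.powersetCard T, {ω | ∀ e ∈ R, ω e = true} := by
    intro ω hω
    obtain ⟨R, hRS, hRT⟩ := exists_subset_card_eq hω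
    refine Set.mem_biUnion (mem_powersetCard.2 ⟨hRS.trans (filter_subset _ _), hRT⟩) ?_
    exact fun e he => (mem_filter.1 (hRS he)).2
  calc gnp n p hp {ω | T ≤ #{e ∈ S | ω e = true}}
      ≤ ∑ R ∈ S.powersetCard T, gnp n p hp {ω | ∀ e ∈ R, ω e = true} :=
        (measure_mono hcover).trans (measure_biUnion_finset_le _ _)
    _ = (#S).choose T * p ^ T := by
        rw [sum_congr rfl fun R hR => by rw [gnp_forall_mem_eq_true, (mem_powersetCard.1 hR).2],
          sum_const, card_powersetCard, nsmul_eq_mul]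

theorem gnp_max_lt_edgesIn_le (U : Finset (Fin n)) (L : ℝ) :
    gnp n p hp {ω | max (3 * #U * L) (3 * (#U : ℝ) ^ 2 * p.toReal) < edgesIn (graphOf ω) U}
      ≤ ENNReal.ofReal (exp (-(2 * #U * L))) := by
  set M := max (3 * #U * L) (3 * (#U : ℝ) ^ 2 * p.toReal)
  have hM : 0 ≤ M := le_max_of_le_right (by positivity)
  set T := ⌊M⌋₊ + 1
  have hMT : M < T := by exact_mod_cast Nat.lt_floor_add_one M
  have hsub : {ω | M < edgesIn (graphOf ω) U} ⊆
      {ω | T ≤ #{e ∈ potentialEdges U | ω e = true}} := by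
    intro ω hω
    rw [Set.mem_setOf_eq, edgesIn_graphOf] at hω
    exact (Nat.floor_lt hM).2 hω
  have hp' : p = ENNReal.ofReal p.toReal :=
    (ENNReal.ofReal_toReal (hp.trans_lt ENNReal.one_lt_top).ne).symm
  calc gnp n p hp {ω | M < edgesIn (graphOf ω) U}
      ≤ (#(potentialEdges U)).choose T * p ^ T :=
        (measure_mono hsub).trans (gnp_le_card_filter_le n p hp _ _)
    _ = ENNReal.ofReal ((#(potentialEdges U)).choose T * p.toReal ^ T) := by
        rw [ENNReal.ofReal_mul (by positivity), ENNReal.ofReal_natCast,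
          ENNReal.ofReal_pow ENNReal.toReal_nonneg, ← hp']
    _ ≤ ENNReal.ofReal (exp (-(2 * #U * L))) :=
        ENNReal.ofReal_le_ofReal (choose_mul_pow_le_exp_neg ENNReal.toReal_nonneg
          (card_potentialEdges U).le ((le_max_right _ _).trans hMT.le)
          ((le_max_left _ _).trans hMT.le))

theorem gnp_compl_forall_edgesIn_le_le (L : ℝ) :
    gnp n p hp {ω | ∀ U : Set (Fin n), (edgesIn (graphOf ω) U : ℝ) ≤
        max (3 * U.ncard * L) (3 * (U.ncard : ℝ) ^ 2 * p.toReal)}ᶜ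
      ≤ ENNReal.ofReal ((1 + exp (-(2 * L))) ^ n - 1) := by
  classical
  have hterm (U : Finset (Fin n)) : exp (-(2 * #U * L)) = exp (-(2 * L)) ^ #U := by
    rw [← exp_nat_mul]; ring_nf
  calc _ ≤ gnp n p hp (⋃ U ∈ (univ : Finset (Finset (Fin n))).erase ∅,
          {ω | max (3 * #U * L) (3 * (#U : ℝ) ^ 2 * p.toReal) < edgesIn (graphOf ω) U}) :=
        measure_mono fun ω hω => ?_
    _ ≤ ∑ U ∈ (univ : Finset (Finset (Fin n))).erase ∅,
          gnp n p hp {ω | max (3 * #U * L) (3 * (#U : ℝ) ^ 2 * p.toReal) <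
            edgesIn (graphOf ω) U} := measure_biUnion_finset_le _ _
    _ ≤ ∑ U ∈ (univ : Finset (Finset (Fin n))).erase ∅,
          ENNReal.ofReal (exp (-(2 * L)) ^ #U) :=
        sum_le_sum fun U _ => (hterm U) ▸ gnp_max_lt_edgesIn_le n p hp U L
    _ = ENNReal.ofReal ((1 + exp (-(2 * L))) ^ n - 1) := by
        rw [← ENNReal.ofReal_sum_of_nonneg (fun U _ => by positivity),
          sum_erase_empty_pow_card, Fintype.card_fin]
  simp only [Set.mem_compl_iff, Set.mem_setOf_eq, not_forall, not_le] at hω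
  obtain ⟨U, hU⟩ := hω
  rw [← Set.coe_toFinset U, Set.ncard_coe_finset] at hU
  refine Set.mem_biUnion (mem_erase.2 ⟨fun h => ?_, mem_univ _⟩) hU
  rw [h, edgesIn_graphOf] at hU
  simp [potentialEdges] at hU

end Gnp

theorem tendsto_measure_of_tendsto_measure_compl {ι : Type*} {l : Filter ι}
    {Ω : ι → Type*} [∀ i, MeasurableSpace (Ω i)] {μ : ∀ i, Measure (Ω i)}
    [∀ i, IsProbabilityMeasure (μ i)] {s : ∀ i, Set (Ω i)} (hs : ∀ i, MeasurableSet (s i))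
    (h : Tendsto (fun i => μ i (s i)ᶜ) l (nhds 0)) :
    Tendsto (fun i => μ i (s i)) l (nhds 1) := by
  have hlim := ENNReal.Tendsto.sub tendsto_const_nhds h (Or.inl ENNReal.one_ne_top)
  rw [tsub_zero] at hlim
  exact hlim.congr fun i => by rw [← prob_compl_eq_one_sub (hs i).compl, compl_compl]

theorem gnp_edges_in_sets_general (p : ℕ → ENNReal) (hp : ∀ n, p n ≤ 1) :
    Tendsto
      (fun n => gnp n (p n) (hp n)
        {ω | ∀ U : Set (Fin n),
          (edgesIn (graphOf ω) U : ℝ) ≤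
            max (3 * U.ncard * Real.log n) (3 * (U.ncard : ℝ) ^ 2 * (p n).toReal)})
      atTop (nhds 1) := by
  refine tendsto_measure_of_tendsto_measure_compl (fun n => (Set.toFinite _).measurableSet) ?_
  have hbound := ENNReal.tendsto_ofReal tendsto_one_add_exp_neg_two_mul_log_pow_sub_one
  rw [ENNReal.ofReal_zero] at hbound
  exact tendsto_of_tendsto_of_tendsto_of_le_of_le tendsto_const_nhds hbound (fun _ => zero_le)
    fun n => gnp_compl_forall_edgesIn_le_le n (p n) (hp n) (log n)

/-- P2. Let `p ≥ (ln n)/n`. Then w.h.p. `G ~ G(n,p)` is such that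
every vertex subset `U` spans at most `max {3|U| ln n, 3|U|² p}` edges. -/
theorem gnp_edges_in_sets (p : ℕ → ENNReal) (hp : ∀ n, p n ≤ 1)
    (hlb : ∀ n : ℕ, ENNReal.ofReal (Real.log n / n) ≤ p n) :
    Tendsto
      (fun n => gnp n (p n) (hp n)
        {ω | ∀ U : Set (Fin n),
          (edgesIn (graphOf ω) U : ℝ) ≤
            max (3 * U.ncard * Real.log n) (3 * (U.ncard : ℝ) ^ 2 * (p n).toReal)})
      atTop (nhds 1) :=
  gnp_edges_in_sets_general p hp
end

section
/- Let p ≥ (ln n)/n. With probability tending to 1 as n → ∞, G ~ G(n,p) satisfies: every subset U of vertices with 1/p ≤ |U| ≤ n/(ln n) has external neighborhood of size at least n/4. -/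
open MeasureTheory Filter

/-- The external neighborhood of a vertex set `U` in a graph `G`. -/
def extNbhd {V : Type*} (G : SimpleGraph V) (U : Set V) : Set V :=
  {v | v ∉ U ∧ ∃ u ∈ U, G.Adj u v}

/-!
If an admissible `U` has `|N(U)| < n/4`, the set `S` of vertices outside `U ∪ N(U)` has at least
`3n/4 - n/ln n` elements and no edge joins `U` to `S`. For fixed disjoint `U` and `S` this has
probability `(1-p)^{|U||S|} ≤ e^{-p|U||S|} ≤ e^{-|S|}`, because `p|U| ≥ 1`. A union bound over at
most `2^n` sets `S` and `e^{o(n)}` sets `U` of size at most `n/ln n` bounds the failure probability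
by `e^{o(n)} 2^n e^{-3n/4}`, which is exponentially small since `ln 2 < 3/4`.
-/

open Finset Real

instance (n : ℕ) (p : ENNReal) (hp : p ≤ 1) : IsProbabilityMeasure (gnp n p hp) := by
  unfold gnp; infer_instance

lemma gnp_forall_eq_false (n : ℕ) (p : ENNReal) (hp : p ≤ 1) (E : Finset (Sym2 (Fin n))) :
    gnp n p hp {ω | ∀ e ∈ E, ω e = false} = (1 - p) ^ #E := by
  have hE : {ω : Sym2 (Fin n) → Bool | ∀ e ∈ E, ω e = false} =
      (E : Set _).pi fun _ => {false} := by
    ext; simp [Set.mem_pi]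
  rw [hE, gnp, Measure.pi_pi_finset, prod_const,
    PMF.toMeasure_apply_singleton _ _ (measurableSet_singleton _)]
  change ((1 - p.toNNReal : NNReal) : ENNReal) ^ #E = _
  rw [ENNReal.coe_sub, ENNReal.coe_toNNReal (ne_top_of_le_ne_top ENNReal.one_ne_top hp),
    ENNReal.coe_one]

lemma one_sub_pow_le_ofReal_exp {p : ENNReal} (hp : p ≤ 1) (k : ℕ) :
    (1 - p) ^ k ≤ ENNReal.ofReal (exp (-(p.toReal * k))) := by
  have hp' : p.toReal ≤ 1 := ENNReal.toReal_le_of_le_ofReal zero_le_one (by simpa using hp)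
  have h1p : 1 - p = ENNReal.ofReal (1 - p.toReal) := by
    rw [ENNReal.ofReal_sub _ ENNReal.toReal_nonneg, ENNReal.ofReal_one,
      ENNReal.ofReal_toReal (ne_top_of_le_ne_top ENNReal.one_ne_top hp)]
  rw [h1p, ← ENNReal.ofReal_pow (by linarith)]
  refine ENNReal.ofReal_le_ofReal ?_
  calc (1 - p.toReal) ^ k ≤ exp (-p.toReal) ^ k :=
        pow_le_pow_left₀ (by linarith) (one_sub_le_exp_neg _) k
    _ = exp (-(p.toReal * k)) := by rw [← exp_nat_mul]; ring_nf

lemma card_image_sym2_product_of_disjoint {α : Type*} [DecidableEq α] {U S : Finset α}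
    (h : Disjoint U S) : #((U ×ˢ S).image fun x => s(x.1, x.2)) = #U * #S := by
  rw [card_image_of_injOn, card_product]
  rintro ⟨u, v⟩ huv ⟨u', v'⟩ huv' heq
  simp only [coe_product, Set.mem_prod, mem_coe] at huv huv'
  rcases Sym2.mk_eq_mk_iff.mp heq with h' | h'
  · exact h'
  · simp only [Prod.swap_prod_mk, Prod.mk.injEq] at h'
    exact absurd (h'.1 ▸ huv'.2) (disjoint_left.mp h huv.1)

lemma gnp_forall_forall_eq_false_le (n : ℕ) (p : ENNReal) (hp : p ≤ 1) {U S : Finset (Fin n)}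
    (h : Disjoint U S) :
    gnp n p hp {ω | ∀ u ∈ U, ∀ v ∈ S, ω s(u, v) = false} ≤
      ENNReal.ofReal (exp (-(p.toReal * (#U * #S)))) := by
  have hE : {ω : Sym2 (Fin n) → Bool | ∀ u ∈ U, ∀ v ∈ S, ω s(u, v) = false} =
      {ω | ∀ e ∈ (U ×ˢ S).image fun x => s(x.1, x.2), ω e = false} := by
    ext ω
    simp only [Set.mem_ofPred_eq, forall_mem_image, mem_product, Prod.forall, and_imp]
    exact ⟨fun h a b ha hb => h a ha b hb, fun h a ha b hb => h a b ha hb⟩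
  rw [hE, gnp_forall_eq_false, card_image_sym2_product_of_disjoint h]
  exact_mod_cast one_sub_pow_le_ofReal_exp hp _

lemma gnp_exists_nonadjacent_le (n : ℕ) (q : ENNReal) (hq : q ≤ 1) (K : ℕ) (x : ℝ) :
    gnp n q hq {ω | ∃ U S : Finset (Fin n), #U ≤ K ∧ 1 ≤ q.toReal * #U ∧ Disjoint U S ∧
        x ≤ #S ∧ ∀ u ∈ U, ∀ v ∈ S, ω s(u, v) = false} ≤
      ENNReal.ofReal (#{U : Finset (Fin n) | #U ≤ K} * 2 ^ n * exp (-x)) := by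
  classical
  set T : Finset (Finset (Fin n) × Finset (Fin n)) :=
    {P | #P.1 ≤ K ∧ 1 ≤ q.toReal * #P.1 ∧ Disjoint P.1 P.2 ∧ x ≤ #P.2}
  let noEdges (P : Finset (Fin n) × Finset (Fin n)) : Set (Sym2 (Fin n) → Bool) :=
    {ω | ∀ u ∈ P.1, ∀ v ∈ P.2, ω s(u, v) = false}
  have hsub : {ω | ∃ U S : Finset (Fin n), #U ≤ K ∧ 1 ≤ q.toReal * #U ∧ Disjoint U S ∧
      x ≤ #S ∧ ∀ u ∈ U, ∀ v ∈ S, ω s(u, v) = false} ⊆ ⋃ P ∈ T, noEdges P := by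
    rintro ω ⟨U, S, hK, hqU, hUS, hx, hω⟩
    exact Set.mem_biUnion (x := (U, S)) (by simp [T, *]) hω
  have hT : #T ≤ #{U : Finset (Fin n) | #U ≤ K} * 2 ^ n := by
    calc #T ≤ #(({U | #U ≤ K} : Finset (Finset (Fin n))) ×ˢ univ) :=
          card_le_card fun P hP => by simp_all [T]
      _ = _ := by rw [card_product, card_univ, Fintype.card_finset, Fintype.card_fin]
  have hP : ∀ P ∈ T, gnp n q hq (noEdges P) ≤ ENNReal.ofReal (exp (-x)) := by
    intro P hP
    simp only [T, mem_filter, mem_univ, true_and] at hP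
    obtain ⟨-, hqU, hdisj, hx⟩ := hP
    refine (gnp_forall_forall_eq_false_le n q hq hdisj).trans
      (ENNReal.ofReal_le_ofReal (exp_le_exp.mpr ?_))
    nlinarith
  calc _ ≤ gnp n q hq (⋃ P ∈ T, noEdges P) := measure_mono hsub
    _ ≤ ∑ P ∈ T, gnp n q hq (noEdges P) := measure_biUnion_finset_le _ _
    _ ≤ ∑ P ∈ T, ENNReal.ofReal (exp (-x)) := sum_le_sum hP
    _ = ENNReal.ofReal (#T * exp (-x)) := by
        rw [sum_const, nsmul_eq_mul, ENNReal.ofReal_mul (by positivity), ENNReal.ofReal_natCast]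
    _ ≤ _ := ENNReal.ofReal_le_ofReal (by gcongr; exact_mod_cast hT)

lemma graphOf_adj {n : ℕ} {ω : Sym2 (Fin n) → Bool} {u v : Fin n} :
    (graphOf ω).Adj u v ↔ ω s(u, v) = true ∧ u ≠ v := by
  simp [graphOf]

lemma exists_disjoint_nonadj_card_le_add_ncard_extNbhd {V : Type*} [Fintype V]
    (G : SimpleGraph V) (U : Finset V) :
    ∃ S : Finset V, Disjoint U S ∧ Fintype.card V ≤ #U + (extNbhd G U).ncard + #S ∧
      ∀ u ∈ U, ∀ v ∈ S, ¬ G.Adj u v := by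
  classical
  refine ⟨(U ∪ (extNbhd G U).toFinset)ᶜ, ?_, ?_, ?_⟩
  · exact disjoint_compl_right.mono_left subset_union_left
  · rw [card_compl, Set.ncard_eq_toFinset_card']
    have := card_union_le U (extNbhd G U).toFinset
    have := card_le_univ (U ∪ (extNbhd G U).toFinset)
    omega
  · intro u hu v hv hadj
    simp only [mem_compl, mem_union, Set.mem_toFinset, not_or] at hv
    exact hv.2 ⟨fun hvU => hv.1 hvU, u, hu, hadj⟩

lemma compl_setOf_extNbhd_subset (n : ℕ) (q : ENNReal) (hq : 0 < q.toReal) :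
    {ω : Sym2 (Fin n) → Bool | ∀ U : Set (Fin n),
      1 / q.toReal ≤ (U.ncard : ℝ) → (U.ncard : ℝ) ≤ n / log n →
      ((extNbhd (graphOf ω) U).ncard : ℝ) ≥ n / 4}ᶜ ⊆
    {ω | ∃ U S : Finset (Fin n), #U ≤ ⌊n / log n⌋₊ ∧ 1 ≤ q.toReal * #U ∧ Disjoint U S ∧
      3 * n / 4 - n / log n ≤ #S ∧ ∀ u ∈ U, ∀ v ∈ S, ω s(u, v) = false} := by
  classical
  intro ω hω
  simp only [Set.mem_compl_iff, Set.mem_ofPred_eq, not_forall, not_le] at hω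
  obtain ⟨U, hqU, hUn, hN⟩ := hω
  obtain ⟨S, hdisj, hcard, hnadj⟩ :=
    exists_disjoint_nonadj_card_le_add_ncard_extNbhd (graphOf ω) U.toFinset
  rw [Set.coe_toFinset, Fintype.card_fin, ← Set.ncard_eq_toFinset_card'] at hcard
  refine ⟨U.toFinset, S, Nat.le_floor ?_, ?_, hdisj, ?_, fun u hu v hv => ?_⟩
  · rwa [← Set.ncard_eq_toFinset_card']
  · rw [← Set.ncard_eq_toFinset_card']
    rw [div_le_iff₀ hq] at hqU
    linarith
  · have : (n : ℝ) ≤ U.ncard + (extNbhd (graphOf ω) U).ncard + #S := by exact_mod_cast hcard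
    linarith
  · have huv : u ≠ v := fun h => disjoint_left.mp hdisj hu (h ▸ hv)
    simpa [graphOf_adj, huv] using hnadj u hu v hv

lemma card_filter_card_le_mul_pow_le {α : Type*} [Fintype α] (K : ℕ) {ε : ℝ} (h0 : 0 ≤ ε)
    (h1 : ε ≤ 1) : #{U : Finset α | #U ≤ K} * ε ^ K ≤ (1 + ε) ^ Fintype.card α := by
  calc (#{U : Finset α | #U ≤ K} : ℝ) * ε ^ K = ∑ U : Finset α with #U ≤ K, ε ^ K := by
        rw [sum_const, nsmul_eq_mul]
    _ ≤ ∑ U : Finset α with #U ≤ K, ε ^ #U :=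
        sum_le_sum fun U hU => pow_le_pow_of_le_one h0 h1 (mem_filter.mp hU).2
    _ ≤ ∑ U : Finset α, ε ^ #U := sum_le_sum_of_subset_of_nonneg (filter_subset _ _)
        fun _ _ _ => by positivity
    _ = (1 + ε) ^ Fintype.card α := by
        simpa [powerset_univ, add_comm] using sum_pow_mul_eq_add_pow ε 1 (univ : Finset α)

lemma card_filter_card_le_mul_two_pow_mul_exp_le {n : ℕ} (hL : 1000 ≤ log n) :
    #{U : Finset (Fin n) | #U ≤ ⌊n / log n⌋₊} * 2 ^ n * exp (-(3 * n / 4 - n / log n)) ≤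
      exp (-(n / 100)) := by
  set K := ⌊n / log n⌋₊
  -- With `ε = 1/64` the exponent is at most `(1/64 + 1.006 log 2 - 0.749) n < -n/100`.
  have hnL : (n : ℝ) / log n ≤ n / 1000 :=
    div_le_div_of_nonneg_left (by positivity) (by norm_num) hL
  have hK : (K : ℝ) ≤ n / 1000 := (Nat.floor_le (by positivity)).trans hnL
  have hcount : (#{U : Finset (Fin n) | #U ≤ K} : ℝ) ≤ exp (n / 64) * 2 ^ (6 * K) := by
    have h := card_filter_card_le_mul_pow_le (α := Fin n) K (ε := 1 / 64)
      (by norm_num) (by norm_num)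
    rw [Fintype.card_fin] at h
    calc (#{U : Finset (Fin n) | #U ≤ K} : ℝ)
        = #{U : Finset (Fin n) | #U ≤ K} * (1 / 64) ^ K * 64 ^ K := by
          rw [mul_assoc, ← mul_pow]; norm_num
      _ ≤ (1 + 1 / 64) ^ n * 64 ^ K := by gcongr
      _ ≤ exp (1 / 64) ^ n * 2 ^ (6 * K) := by
          rw [pow_mul]
          gcongr
          · linarith [add_one_le_exp (1 / 64 : ℝ)]
          · norm_num
      _ = exp (n / 64) * 2 ^ (6 * K) := by rw [← exp_nat_mul]; ring_nf
  have hlog2 : ((6 * K + n : ℕ) : ℝ) * log 2 ≤ (6 * K + n : ℕ) * 0.6931471808 :=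
    mul_le_mul_of_nonneg_left log_two_lt_d9.le (by positivity)
  calc _ ≤ exp (n / 64) * 2 ^ (6 * K) * 2 ^ n * exp (-(3 * n / 4 - n / log n)) := by gcongr
    _ = exp (n / 64 + (6 * K + n : ℕ) * log 2 + -(3 * n / 4 - n / log n)) := by
        rw [exp_add, exp_add, exp_nat_mul, exp_log two_pos, pow_add]; ring
    _ ≤ exp (-(n / 100)) := by
        gcongr
        push_cast at hlog2 ⊢
        linarith

lemma gnp_compl_setOf_extNbhd_le {n : ℕ} (q : ENNReal) (hq : q ≤ 1) (hL : 1000 ≤ log n)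
    (hlb : ENNReal.ofReal (log n / n) ≤ q) :
    gnp n q hq {ω : Sym2 (Fin n) → Bool | ∀ U : Set (Fin n),
      1 / q.toReal ≤ (U.ncard : ℝ) → (U.ncard : ℝ) ≤ n / log n →
      ((extNbhd (graphOf ω) U).ncard : ℝ) ≥ n / 4}ᶜ ≤ ENNReal.ofReal (exp (-(n / 100))) := by
  have hn : n ≠ 0 := by rintro rfl; norm_num at hL
  have hlogn : 0 < log n := by linarith
  have hq0 : 0 < q.toReal := lt_of_lt_of_le (by positivity) <|
    (ENNReal.ofReal_le_iff_le_toReal (ne_top_of_le_ne_top ENNReal.one_ne_top hq)).mp hlb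
  calc _ ≤ _ := measure_mono (compl_setOf_extNbhd_subset n q hq0)
    _ ≤ _ := gnp_exists_nonadjacent_le n q hq _ _
    _ ≤ _ := ENNReal.ofReal_le_ofReal (card_filter_card_le_mul_two_pow_mul_exp_le hL)

/-- P5. Let `p ≥ (ln n)/n`. Then w.h.p. `G ~ G(n,p)` is such that
every `U` with `1/p ≤ |U| ≤ n/ln n` has external neighborhood of size at least `n/4`. -/
theorem gnp_ext_neighborhood (p : ℕ → ENNReal) (hp : ∀ n, p n ≤ 1)
    (hlb : ∀ n : ℕ, ENNReal.ofReal (Real.log n / n) ≤ p n) :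
    Tendsto
      (fun n => gnp n (p n) (hp n)
        {ω | ∀ U : Set (Fin n),
          1 / (p n).toReal ≤ (U.ncard : ℝ) →
          (U.ncard : ℝ) ≤ n / Real.log n →
          ((extNbhd (graphOf ω) U).ncard : ℝ) ≥ n / 4})
      atTop (nhds 1) := by
  set good : ∀ n : ℕ, Set (Sym2 (Fin n) → Bool) := fun n => {ω | ∀ U : Set (Fin n),
    1 / (p n).toReal ≤ (U.ncard : ℝ) → (U.ncard : ℝ) ≤ n / Real.log n →
    ((extNbhd (graphOf ω) U).ncard : ℝ) ≥ n / 4}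
  have hbad : ∀ᶠ n : ℕ in atTop,
      gnp n (p n) (hp n) (good n)ᶜ ≤ ENNReal.ofReal (exp (-(n / 100))) := by
    filter_upwards [(tendsto_log_atTop.comp tendsto_natCast_atTop_atTop).eventually_ge_atTop 1000]
      with n hL using gnp_compl_setOf_extNbhd_le (p n) (hp n) hL (hlb n)
  have hexp : Tendsto (fun n : ℕ => ENNReal.ofReal (exp (-(n / 100)))) atTop (nhds 0) := by
    simpa using ENNReal.tendsto_ofReal (tendsto_exp_neg_atTop_nhds_zero.comp
      (tendsto_natCast_atTop_atTop.atTop_div_const (by norm_num : (0 : ℝ) < 100)))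
  have hbad0 : Tendsto (fun n => gnp n (p n) (hp n) (good n)ᶜ) atTop (nhds 0) :=
    tendsto_of_tendsto_of_tendsto_of_le_of_le' tendsto_const_nhds hexp
      (Eventually.of_forall fun _ => bot_le) hbad
  have hgood := ENNReal.Tendsto.sub tendsto_const_nhds hbad0 (Or.inl ENNReal.one_ne_top)
  rw [tsub_zero] at hgood
  refine hgood.congr fun n => ?_
  rw [← prob_compl_eq_one_sub MeasurableSet.of_discrete, compl_compl]
end

section
/- Let ε > 0, p ≥ (ln n)/n, f(n) = np/ln n, and α ≥ √(4/f(n)) + ε. With probability tending to 1 as n → ∞, G ~ G(n,p) satisfies: for every vertex subset U, the number of edges between U and its complement is at least (1-α)·|U|·(n-|U|)·p. -/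
/-!
For `|U| = k ≤ n/2` the number of edges leaving `U` is binomial with mean `μ = k(n-k)p`, so the
Chernoff bound `P(X < (1-α)μ) ≤ exp(-α²μ/2)` applies; its exponent comes from the quadratic lower
bound `klFun (1-α) ≥ α²/2` on the Kullback–Leibler function. As `α² ≥ 4 log n/(np) + ε²`,
`k(n-k) ≥ kn/2` and `np ≥ log n`, the failure probability is at most `x^k` with
`x = n^{-(1+ε²/4)}`. A cut and the cut of its complement coincide, so sets with `k ≤ n/2` suffice,
and the union bound over nonempty `U` gives `∑_U x^|U| = (1+x)^n - 1 ≤ exp(n^{-ε²/4}) - 1 → 0`.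
-/

open MeasureTheory Filter

/-- The number of edges of `G` with one endpoint in `A` and one endpoint in `B`. -/
noncomputable def edgesBetween {V : Type*} (G : SimpleGraph V) (A B : Set V) : ℕ :=
  {e ∈ G.edgeSet | ∃ a ∈ A, ∃ b ∈ B, e = s(a, b)}.ncard

open Finset Real InformationTheory

lemma sq_div_two_le_klFun {x : ℝ} (h0 : 0 ≤ x) (h1 : x ≤ 1) :
    (1 - x) ^ 2 / 2 ≤ klFun x := by
  have hderiv : ∀ y ∈ Set.Ioo (0 : ℝ) 1,
      HasDerivAt (fun y => klFun y - (1 - y) ^ 2 / 2) (log y + (1 - y)) y := by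
    intro y hy
    refine ((hasDerivAt_klFun hy.1.ne').sub
      (((hasDerivAt_id' y).const_sub 1).pow 2 |>.div_const 2)).congr_deriv ?_
    push_cast; ring
  have hanti : AntitoneOn (fun y => klFun y - (1 - y) ^ 2 / 2) (Set.Icc 0 1) := by
    refine antitoneOn_of_deriv_nonpos (convex_Icc 0 1) (by fun_prop) ?_ ?_ <;> rw [interior_Icc]
    · exact fun y hy => (hderiv y hy).differentiableAt.differentiableWithinAt
    · intro y hy
      rw [(hderiv y hy).deriv]
      linarith [log_le_sub_one_of_pos hy.1]
  have := hanti ⟨h0, h1⟩ ⟨zero_le_one, le_rfl⟩ h1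
  simp only [klFun_one] at this
  linarith

section Gnp

variable {n : ℕ} {p : ENNReal} (hp : p ≤ 1)

instance : IsProbabilityMeasure (gnp n p hp) :=
  inferInstanceAs (IsProbabilityMeasure (Measure.pi _))

lemma gnp_real_singleton (ω : Sym2 (Fin n) → Bool) :
    (gnp n p hp).real {ω} = ∏ e, if ω e then p.toReal else 1 - p.toReal := by
  rw [measureReal_def, gnp, ← Set.univ_pi_singleton, Measure.pi_pi, ENNReal.toReal_prod]
  refine prod_congr rfl fun e _ => ?_
  rw [PMF.toMeasure_apply_singleton _ _ (measurableSet_singleton _)]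
  -- `PMF.bernoulli_apply` does not rewrite here: the proof term inside `gnp` only typechecks
  -- after unfolding `ENNReal.toNNReal 1`, so the atoms are exposed by `change` instead.
  cases ω e
  · change ((1 - p.toNNReal : NNReal) : ENNReal).toReal = _
    rw [ENNReal.coe_toReal,
      NNReal.coe_sub (by simpa using ENNReal.toNNReal_mono ENNReal.one_ne_top hp), NNReal.coe_one,
      ENNReal.coe_toNNReal_eq_toReal, if_neg Bool.false_ne_true]
  · rfl

lemma integral_gnp_prod (f : Sym2 (Fin n) → Bool → ℝ) :
    ∫ ω, ∏ e, f e (ω e) ∂gnp n p hp = ∏ e, (f e true * p.toReal + f e false * (1 - p.toReal)) := by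
  rw [integral_fintype .of_finite]
  simp_rw [gnp_real_singleton, smul_eq_mul, ← prod_mul_distrib]
  rw [← Fintype.prod_sum fun e (b : Bool) => (if b then p.toReal else 1 - p.toReal) * f e b]
  simp only [Fintype.sum_bool, if_true, Bool.false_eq_true, if_false]
  exact prod_congr rfl fun e _ => by ring

lemma integral_pow_card_filter_gnp (S : Finset (Sym2 (Fin n))) (c : ℝ) :
    ∫ ω, c ^ #{e ∈ S | ω e} ∂gnp n p hp = (c * p.toReal + (1 - p.toReal)) ^ #S := by
  have hprod (ω : Sym2 (Fin n) → Bool) :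
      c ^ #{e ∈ S | ω e} = ∏ e, if e ∈ S then (if ω e then c else 1) else 1 := by
    rw [Fintype.prod_extend_by_one, ← prod_filter, prod_const]
  simp_rw [hprod]
  rw [integral_gnp_prod hp fun e b => if e ∈ S then (if b then c else 1) else 1]
  simp only [if_true, Bool.false_eq_true, if_false]
  rw [← prod_const, ← Fintype.prod_extend_by_one S]
  exact Fintype.prod_congr _ _ fun e => by split_ifs <;> ring

lemma gnp_real_card_filter_lt_le (S : Finset (Sym2 (Fin n))) {α : ℝ} (hα : 0 ≤ α) :
    (gnp n p hp).real {ω | (#{e ∈ S | ω e} : ℝ) < (1 - α) * #S * p.toReal} ≤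
      exp (-(α ^ 2 * #S * p.toReal / 2)) := by
  set q := p.toReal
  have hq0 : 0 ≤ q := ENNReal.toReal_nonneg
  have hq1 : q ≤ 1 := by simpa using ENNReal.toReal_mono ENNReal.one_ne_top hp
  obtain hα1 | hα1 := le_or_gt 1 α
  · have hempty : {ω : Sym2 (Fin n) → Bool | (#{e ∈ S | ω e} : ℝ) < (1 - α) * #S * q} = ∅ := by
      refine Set.eq_empty_of_forall_notMem fun ω => Set.notMem_ofPred_iff.2 (not_lt.2 ?_)
      have : (1 - α) * #S * q ≤ 0 := mul_nonpos_of_nonpos_of_nonneg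
        (mul_nonpos_of_nonpos_of_nonneg (by linarith) (by positivity)) hq0
      exact this.trans (Nat.cast_nonneg _)
    rw [hempty, measureReal_empty]
    positivity
  set c := 1 - α
  have hc0 : 0 < c := by linarith
  set θ := c * #S * q
  have hsub : {ω : Sym2 (Fin n) → Bool | (#{e ∈ S | ω e} : ℝ) < θ} ⊆
      {ω | c ^ θ ≤ c ^ #{e ∈ S | ω e}} := fun ω hω => by
    simpa only [Set.mem_ofPred_eq, ← rpow_natCast] using
      rpow_le_rpow_of_exponent_ge hc0 (by linarith) (le_of_lt hω)
  have hmarkov := mul_meas_ge_le_integral_of_nonneg (μ := gnp n p hp)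
    (f := fun ω : Sym2 (Fin n) → Bool => c ^ #{e ∈ S | ω e}) (ae_of_all _ fun ω => by positivity)
    .of_finite (c ^ θ)
  rw [integral_pow_card_filter_gnp] at hmarkov
  have hmgf : (c * q + (1 - q)) ^ #S ≤ exp (-(α * q)) ^ #S :=
    pow_le_pow_left₀ (by nlinarith) (by linarith [add_one_le_exp (-(α * q))]) _
  calc (gnp n p hp).real {ω | (#{e ∈ S | ω e} : ℝ) < θ}
      ≤ (gnp n p hp).real {ω | c ^ θ ≤ c ^ #{e ∈ S | ω e}} := measureReal_mono hsub
    _ ≤ (c * q + (1 - q)) ^ #S / c ^ θ := by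
      rw [le_div_iff₀' (rpow_pos_of_pos hc0 θ)]; exact hmarkov
    _ ≤ exp (-(α * q)) ^ #S / exp (log c * θ) := by
      rw [← rpow_def_of_pos hc0]; gcongr
    _ = exp (-(#S * q * klFun c)) := by
      rw [← exp_nat_mul, ← exp_sub, klFun_apply]
      simp only [θ, c]; ring_nf
    _ ≤ exp (-(α ^ 2 * #S * q / 2)) := by
      have hkl := sq_div_two_le_klFun hc0.le (by linarith : c ≤ 1)
      rw [show 1 - c = α by ring] at hkl
      gcongr
      nlinarith [mul_le_mul_of_nonneg_left hkl (by positivity : (0 : ℝ) ≤ #S * q)]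

end Gnp

section Cut

variable {V : Type*}

lemma edgesBetween_comm (G : SimpleGraph V) (A B : Set V) :
    edgesBetween G A B = edgesBetween G B A := by
  unfold edgesBetween
  congr 1
  ext e
  simp only [Set.mem_ofPred_eq]
  refine and_congr_right fun _ => ⟨?_, ?_⟩ <;>
    exact fun ⟨a, ha, b, hb, he⟩ => ⟨b, hb, a, ha, he.trans Sym2.eq_swap⟩

variable [Fintype V]

lemma le_edgesBetween_of_forall_small (G : SimpleGraph V) (c : ℝ)
    (h : ∀ U : Set V, U.Nonempty → 2 * U.ncard ≤ Fintype.card V →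
      c * U.ncard * (Fintype.card V - U.ncard) ≤ edgesBetween G U Uᶜ)
    (U : Set V) : c * U.ncard * (Fintype.card V - U.ncard) ≤ edgesBetween G U Uᶜ := by
  have hsmall (W : Set V) (hW : 2 * W.ncard ≤ Fintype.card V) :
      c * W.ncard * (Fintype.card V - W.ncard) ≤ edgesBetween G W Wᶜ := by
    obtain rfl | hne := W.eq_empty_or_nonempty
    · simp
    · exact h W hne hW
  have hcard : U.ncard + Uᶜ.ncard = Fintype.card V := by
    rw [Set.ncard_add_ncard_compl, Nat.card_eq_fintype_card]
  by_cases hU : 2 * U.ncard ≤ Fintype.card V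
  · exact hsmall U hU
  have hUc := hsmall Uᶜ (by omega)
  rw [compl_compl, edgesBetween_comm, ← hcard] at hUc
  rw [← hcard]
  push_cast at hUc ⊢
  linarith

variable [DecidableEq V]

def cutPairs (F : Finset V) : Finset (Sym2 V) :=
  (F ×ˢ Fᶜ).image fun ab => s(ab.1, ab.2)

lemma mem_cutPairs {F : Finset V} {e : Sym2 V} :
    e ∈ cutPairs F ↔ ∃ a ∈ F, ∃ b ∉ F, e = s(a, b) := by
  simp only [cutPairs, mem_image, mem_product, mem_compl, Prod.exists]
  constructor
  · rintro ⟨a, b, ⟨ha, hb⟩, rfl⟩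
    exact ⟨a, ha, b, hb, rfl⟩
  · rintro ⟨a, ha, b, hb, rfl⟩
    exact ⟨a, b, ⟨ha, hb⟩, rfl⟩

lemma card_cutPairs (F : Finset V) : #(cutPairs F) = #F * #Fᶜ := by
  rw [cutPairs, card_image_of_injOn, card_product]
  rintro ⟨a, b⟩ hab ⟨a', b'⟩ hab' h
  simp only [coe_product, Set.mem_prod, mem_coe, mem_compl] at hab hab'
  rcases Sym2.eq_iff.1 h with ⟨rfl, rfl⟩ | ⟨rfl, rfl⟩
  · rfl
  · exact absurd hab.1 hab'.2

end Cut

lemma edgesBetween_graphOf {n : ℕ} (ω : Sym2 (Fin n) → Bool) (F : Finset (Fin n)) :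
    edgesBetween (graphOf ω) F (↑F)ᶜ = #{e ∈ cutPairs F | ω e} := by
  rw [edgesBetween, ← Set.ncard_coe_finset]
  congr 1
  ext e
  simp only [coe_filter, Set.mem_ofPred_eq, graphOf, SimpleGraph.edgeSet_fromEdgeSet,
    Set.mem_sdiff, mem_cutPairs, Set.mem_compl_iff, mem_coe]
  constructor
  · rintro ⟨⟨he, -⟩, a, ha, b, hb, rfl⟩
    exact ⟨⟨a, ha, b, hb, rfl⟩, he⟩
  · rintro ⟨⟨a, ha, b, hb, rfl⟩, he⟩
    refine ⟨⟨he, ?_⟩, a, ha, b, hb, rfl⟩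
    rintro (hab : a = b)
    exact hb (hab ▸ ha)

lemma sum_pow_card_filter_nonempty (V : Type*) [Fintype V] {R : Type*} [CommRing R] (x : R) :
    ∑ F : Finset V with F.Nonempty, x ^ #F = (1 + x) ^ Fintype.card V - 1 := by
  classical
  have h := Fintype.sum_pow_mul_eq_add_pow V x 1
  simp only [one_pow, mul_one] at h
  have hfilter : ({F | F.Nonempty} : Finset (Finset V)) = univ.erase ∅ := by
    ext F
    simp [nonempty_iff_ne_empty]
  rw [← add_sum_erase _ _ (mem_univ ∅), card_empty, pow_zero] at h
  rw [hfilter, add_comm 1 x, ← h]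
  ring

lemma gnp_real_exists_sparse_cut_le {n : ℕ} {p : ENNReal} (hp : p ≤ 1) {α : ℝ} (hα : 0 ≤ α)
    {x : ℝ} (hx0 : 0 ≤ x)
    (hx : ∀ k : ℕ, 2 * k ≤ n → exp (-(α ^ 2 * (k * ((n : ℝ) - k)) * p.toReal / 2)) ≤ x ^ k) :
    (gnp n p hp).real {ω | ∀ U : Set (Fin n), (edgesBetween (graphOf ω) U Uᶜ : ℝ) ≥
      (1 - α) * U.ncard * ((n : ℝ) - U.ncard) * p.toReal}ᶜ ≤ (1 + x) ^ n - 1 := by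
  set small : Finset (Finset (Fin n)) := {F | F.Nonempty ∧ 2 * #F ≤ n}
  set bad : Finset (Fin n) → Set (Sym2 (Fin n) → Bool) := fun F =>
    {ω | (#{e ∈ cutPairs F | ω e} : ℝ) < (1 - α) * #(cutPairs F) * p.toReal}
  have hcut (F : Finset (Fin n)) : (#(cutPairs F) : ℝ) = #F * ((n : ℝ) - #F) := by
    rw [card_cutPairs, card_compl, Fintype.card_fin, Nat.cast_mul,
      Nat.cast_sub ((card_le_univ F).trans_eq (Fintype.card_fin n))]
  have hsub : {ω | ∀ U : Set (Fin n), (edgesBetween (graphOf ω) U Uᶜ : ℝ) ≥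
      (1 - α) * U.ncard * ((n : ℝ) - U.ncard) * p.toReal}ᶜ ⊆
      ⋃ F ∈ small, bad F := by
    intro ω hω
    by_contra hbad
    refine hω fun U => ?_
    simp only [Set.mem_iUnion, small, mem_filter, mem_univ, true_and, not_exists, bad,
      Set.mem_ofPred_eq, not_lt] at hbad
    have h := le_edgesBetween_of_forall_small (graphOf ω) ((1 - α) * p.toReal) ?_ U
    · simp only [Fintype.card_fin] at h
      linarith
    intro U hne hsmall
    obtain ⟨F, rfl⟩ := U.toFinite.exists_finset_coe
    rw [Set.ncard_coe_finset, Fintype.card_fin, edgesBetween_graphOf]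
    have := hbad F ⟨by simpa using hne, by simpa using hsmall⟩
    rw [hcut] at this
    linarith
  calc _ ≤ _ := measureReal_mono hsub (measure_ne_top _ _)
    _ ≤ ∑ F ∈ small, (gnp n p hp).real (bad F) := measureReal_biUnion_finset_le _ _
    _ ≤ ∑ F ∈ small, x ^ #F := by
      refine sum_le_sum fun F hF => (gnp_real_card_filter_lt_le hp _ hα).trans ?_
      rw [hcut]
      exact hx #F (mem_filter.1 hF).2.2
    _ ≤ ∑ F : Finset (Fin n) with F.Nonempty, x ^ #F :=
      sum_le_sum_of_subset_of_nonneg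
        (fun F hF => mem_filter.2 ⟨mem_univ F, (mem_filter.1 hF).2.1⟩)
        fun _ _ _ => pow_nonneg hx0 _
    _ = (1 + x) ^ n - 1 := by rw [sum_pow_card_filter_nonempty, Fintype.card_fin]

lemma add_sq_le_sq_of_sqrt_add_le {x ε α : ℝ} (hx : 0 ≤ x) (hε : 0 ≤ ε) (h : √x + ε ≤ α) :
    x + ε ^ 2 ≤ α ^ 2 := by
  have := pow_le_pow_left₀ (by positivity) h 2
  nlinarith [sq_sqrt hx, sqrt_nonneg x]

lemma log_mul_le_chernoff_exponent {n k : ℕ} {q α ε : ℝ} (hn : 2 ≤ n) (hq : log n / n ≤ q)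
    (hα : √(4 / (n * q / log n)) + ε ≤ α) (hε : 0 ≤ ε) (hk : 2 * k ≤ n) :
    (1 + ε ^ 2 / 4) * k * log n ≤ α ^ 2 * (k * ((n : ℝ) - k)) * q / 2 := by
  have hn0 : (0 : ℝ) < n := by positivity
  have hL : 0 < log n := log_pos (by exact_mod_cast hn)
  have hq0 : 0 < q := (div_pos hL hn0).trans_le hq
  have hLnq : log n ≤ n * q := by rwa [div_le_iff₀' hn0] at hq
  have hα2 := add_sq_le_sq_of_sqrt_add_le (by positivity) hε hα
  rw [div_div_eq_mul_div] at hα2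
  have hcut : (k : ℝ) * n / 2 ≤ k * ((n : ℝ) - k) := by
    have : (2 * k : ℝ) ≤ n := by exact_mod_cast hk
    nlinarith [(Nat.cast_nonneg k : (0 : ℝ) ≤ k)]
  calc (1 + ε ^ 2 / 4) * k * log n
      = k * log n + ε ^ 2 * k * log n / 4 := by ring
    _ ≤ k * log n + ε ^ 2 * k * (n * q) / 4 := by gcongr
    _ = (4 * log n / (n * q) + ε ^ 2) * (k * n / 2) * q / 2 := by field_simp; ring
    _ ≤ α ^ 2 * (k * ((n : ℝ) - k)) * q / 2 := by gcongr

lemma tendsto_measure_of_measureReal_compl_le {ι : Type*} {l : Filter ι} {Ω : ι → Type*}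
    [∀ i, MeasurableSpace (Ω i)] {μ : ∀ i, Measure (Ω i)} [∀ i, IsProbabilityMeasure (μ i)]
    {s : ∀ i, Set (Ω i)} (hs : ∀ i, MeasurableSet (s i)) {b : ι → ℝ} (hb : Tendsto b l (nhds 0))
    (h : ∀ᶠ i in l, (μ i).real (s i)ᶜ ≤ b i) : Tendsto (fun i => μ i (s i)) l (nhds 1) := by
  have hreal : Tendsto (fun i => (μ i).real (s i)) l (nhds 1) := by
    refine tendsto_of_tendsto_of_tendsto_of_le_of_le' (by simpa using hb.const_sub 1)
      tendsto_const_nhds ?_ (.of_forall fun i => measureReal_le_one)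
    filter_upwards [h] with i hi
    rw [probReal_compl_eq_one_sub (hs i)] at hi
    linarith
  simpa [ofReal_measureReal] using ENNReal.tendsto_ofReal hreal

/-- P6. Let `ε > 0`, `p ≥ (ln n)/n`, `f(n) = np/ln n` and
`α ≥ √(4/f(n)) + ε`. Then w.h.p. `G ~ G(n,p)` is such that for every vertex subset
`U`, `e(U,Uᶜ) ≥ (1-α)|U|(n-|U|)p`. -/
theorem gnp_edge_boundary (p : ℕ → ENNReal) (hp : ∀ n, p n ≤ 1)
    (hlb : ∀ n : ℕ, ENNReal.ofReal (Real.log n / n) ≤ p n)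
    (ε : ℝ) (hε : 0 < ε) (α : ℕ → ℝ)
    (hα : ∀ n : ℕ,
      α n ≥ Real.sqrt (4 / (n * (p n).toReal / Real.log n)) + ε) :
    Tendsto
      (fun n => gnp n (p n) (hp n)
        {ω | ∀ U : Set (Fin n),
          (edgesBetween (graphOf ω) U Uᶜ : ℝ) ≥
            (1 - α n) * U.ncard * ((n : ℝ) - U.ncard) * (p n).toReal})
      atTop (nhds 1) := by
  have hdecay : Tendsto (fun n : ℕ => exp (-(ε ^ 2 / 4 * log n))) atTop (nhds 0) :=
    tendsto_exp_atBot.comp <| tendsto_neg_atTop_atBot.comp <|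
      (tendsto_log_atTop.comp tendsto_natCast_atTop_atTop).const_mul_atTop (by positivity)
  refine tendsto_measure_of_measureReal_compl_le (fun n => (Set.to_countable _).measurableSet)
    (b := fun n => exp (exp (-(ε ^ 2 / 4 * log n))) - 1)
    (by simpa using ((continuous_exp.tendsto 0).comp hdecay).sub_const 1) ?_
  filter_upwards [eventually_ge_atTop 2] with n hn
  have hq : log n / n ≤ (p n).toReal :=
    (ENNReal.ofReal_le_iff_le_toReal (ne_top_of_le_ne_top ENNReal.one_ne_top (hp n))).1 (hlb n)
  set x := exp (-((1 + ε ^ 2 / 4) * log n))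
  have hnx : n * x = exp (-(ε ^ 2 / 4 * log n)) := by
    nth_rw 1 [← exp_log (by positivity : (0 : ℝ) < n)]
    rw [← exp_add]
    ring_nf
  refine (gnp_real_exists_sparse_cut_le (hp n) ((add_nonneg (sqrt_nonneg _) hε.le).trans (hα n))
    (x := x) (by positivity) fun k hk => ?_).trans ?_
  · rw [← exp_nat_mul, exp_le_exp]
    linarith [log_mul_le_chernoff_exponent hn hq (hα n) hε.le hk]
  · rw [← hnx, exp_nat_mul]
    gcongr
    linarith [add_one_le_exp x]
end
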